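/- Let X be a simplicial set and let ν ⊆ μ ⊆ X₀ be sets of vertices of X. Then the widening W_μ(X) is isomorphic to the widening of W_ν(X) at the set of vertices {(0, v) : v ∈ μ ∖ ν}; that is, W_μ(X) ≅ W_{μ∖ν}(W_ν(X)). -/

import Mathlib

open CategoryTheory Simplicial Opposite Limits

namespace Paper

/-! ## The simplicial set `J`, nerve of the free-living isomorphism -/

/-- The simplicial set `J`, the nerve of the free-living isomorphism `𝕀`:
its `n`-simplices are the tuples `{0,1}^(n+1)` (recorded as `Bool`-valued functions,
`false` being the vertex `0` and `true` the vertex `1`), with all simplicial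
operators acting by reindexing. -/
def J : SSet.{0} where
  obj m := Fin (m.unop.len + 1) → Bool
  map f := TypeCat.ofHom fun a => a ∘ f.unop.toOrderHom
  map_id _ := rfl
  map_comp _ _ := rfl

/-- The two vertices `0, 1 : Δ[0] ⟶ J` of `J`; `ptJ false` is the vertex `0` and
`ptJ true` is the vertex `1`. -/
def ptJ (b : Bool) : Δ[0] ⟶ J where
  app _ := TypeCat.ofHom fun _ => fun _ => b
  naturality _ _ _ := rfl

/-- The boundary `∂J = {0} ∪ {1}` of `J` (two discrete points). -/
def bJ : SSet.{0} where
  obj _ := Bool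
  map _ := TypeCat.ofHom fun b => b
  map_id _ := rfl
  map_comp _ _ := rfl

/-- The inclusion `∂J ↪ J`. -/
def bJIncl : bJ ⟶ J where
  app _ := TypeCat.ofHom fun b => fun _ => b
  naturality _ _ _ := rfl

/-! ## Binary products and pushout-products -/

/-- The (pointwise) product of two simplicial sets. -/
def sprod (X Y : SSet.{0}) : SSet.{0} where
  obj m := X.obj m × Y.obj m
  map f := TypeCat.ofHom fun p => (X.map f p.1, Y.map f p.2)
  map_id m := by
    ext p <;> simp
  map_comp f g := by
    ext p <;> simp

/-- The product of two morphisms of simplicial sets. -/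
def sprodMap {X X' Y Y' : SSet.{0}} (f : X ⟶ X') (g : Y ⟶ Y') : sprod X Y ⟶ sprod X' Y' where
  app m := TypeCat.ofHom fun p => (f.app m p.1, g.app m p.2)
  naturality m m' φ := by
    ext p
    apply Prod.ext
    · exact NatTrans.naturality_apply f φ p.1
    · exact NatTrans.naturality_apply g φ p.2

/-- The pushout-product `f □ g : (A × Z) ∪ (B × W) ⟶ B × Z` of `f : A ⟶ B` and
`g : W ⟶ Z`, the domain being presented as the pushout `(A × Z) ∪_{A × W} (B × W)`. -/
noncomputable def pp {A B W Z : SSet.{0}} (f : A ⟶ B) (g : W ⟶ Z) :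
    pushout (sprodMap (𝟙 A) g) (sprodMap f (𝟙 W)) ⟶ sprod B Z :=
  pushout.desc (sprodMap f (𝟙 Z)) (sprodMap (𝟙 B) g) rfl

/-! ## Saturated classes of morphisms -/

/-- A class of morphisms is stable under retracts if, whenever `f` is a retract of `g`
in the arrow category, membership of `g` implies membership of `f`. -/
def StableUnderRetracts (T : MorphismProperty SSet.{0}) : Prop :=
  ∀ ⦃X Y X' Y' : SSet.{0}⦄ (f : X ⟶ Y) (g : X' ⟶ Y')
    (i : Arrow.mk f ⟶ Arrow.mk g) (r : Arrow.mk g ⟶ Arrow.mk f),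
    i ≫ r = 𝟙 _ → T g → T f

/-- The inclusion functor `Set.Iio i ⥤ ι`. -/
def iioFunctor {ι : Type} [Preorder ι] (i : ι) : Set.Iio i ⥤ ι :=
  Monotone.functor (f := Subtype.val) (fun _ _ h => h)

/-- The cocone on the restriction of `F : ι ⥤ SSet` to `Set.Iio i` with apex `F.obj i`. -/
def restrictionCocone {ι : Type} [Preorder ι] (F : ι ⥤ SSet.{0}) (i : ι) :
    Cocone (iioFunctor i ⋙ F) where
  pt := F.obj i
  ι :=
    { app := fun j => F.map (homOfLE j.2.le)
      naturality := fun j k h => by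
        dsimp [iioFunctor]
        rw [← F.map_comp, Category.comp_id]
        congr 1 }

/-- A class of morphisms is stable under transfinite composition if, for every
well-ordered type `ι` and every functor `F : ι ⥤ SSet` which is continuous at limit
stages and whose successor maps `F.obj i ⟶ F.obj (i+1)` all belong to the class, and
every colimit cocone `c` on `F`, the transfinite composite `F.obj ⊥ ⟶ c.pt` belongs to
the class. -/
def StableUnderTransfiniteComposition (T : MorphismProperty SSet.{0}) : Prop :=
  ∀ (ι : Type) [LinearOrder ι] [SuccOrder ι] [OrderBot ι] [WellFoundedLT ι]
    (F : ι ⥤ SSet.{0}),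
    (∀ i : ι, ¬IsMax i → T (F.map (homOfLE (Order.le_succ i)))) →
    (∀ i : ι, Order.IsSuccLimit i → Nonempty (IsColimit (restrictionCocone F i))) →
    ∀ (c : Cocone F), IsColimit c → T (c.ι.app ⊥)

/-- A class of morphisms of simplicial sets is saturated if it is closed under
isomorphisms, pushouts, transfinite compositions, and retracts. -/
structure IsSaturated (T : MorphismProperty SSet.{0}) : Prop where
  respectsIso : T.RespectsIso
  stableUnderCobaseChange : T.IsStableUnderCobaseChange
  stableUnderRetracts : StableUnderRetracts T
  stableUnderTransfiniteComposition : StableUnderTransfiniteComposition T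

/-- The saturated closure of a class of morphisms: the smallest saturated class
containing it. -/
def satClosure (S : MorphismProperty SSet.{0}) : MorphismProperty SSet.{0} :=
  fun _ _ f => ∀ T : MorphismProperty SSet.{0}, IsSaturated T → S ≤ T → T f

/-! ## Subcomplexes -/

/-- A subcomplex of a simplicial set. -/
structure Sub (X : SSet.{0}) where
  carrier : ∀ m, Set (X.obj m)
  map_mem : ∀ ⦃m m' : SimplexCategoryᵒᵖ⦄ (f : m ⟶ m') ⦃σ : X.obj m⦄,
    σ ∈ carrier m → X.map f σ ∈ carrier m'

/-- The simplicial set underlying a subcomplex. -/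
def Sub.toSSet {X : SSet.{0}} (S : Sub X) : SSet.{0} where
  obj m := S.carrier m
  map f := TypeCat.ofHom fun σ => ⟨X.map f σ.1, S.map_mem f σ.2⟩
  map_id m := by
    ext σ
    simp
  map_comp f g := by
    ext σ
    simp

/-- The inclusion of a subcomplex. -/
def Sub.ι {X : SSet.{0}} (S : Sub X) : S.toSSet ⟶ X where
  app _ := TypeCat.ofHom fun σ => σ.1
  naturality _ _ _ := rfl

/-- Containment of subcomplexes. -/
def Sub.Le {X : SSet.{0}} (S T : Sub X) : Prop := ∀ m, S.carrier m ⊆ T.carrier m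

/-- The inclusion map associated to a containment of subcomplexes. -/
def Sub.homOfLe {X : SSet.{0}} {S T : Sub X} (h : S.Le T) : S.toSSet ⟶ T.toSSet where
  app m := TypeCat.ofHom fun σ => ⟨σ.1, h m σ.2⟩
  naturality _ _ _ := rfl

/-- The union of two subcomplexes. -/
def Sub.union {X : SSet.{0}} (S T : Sub X) : Sub X where
  carrier m := S.carrier m ∪ T.carrier m
  map_mem _ _ f _ h := h.imp (fun hs => S.map_mem f hs) (fun ht => T.map_mem f ht)

/-- The intersection of two subcomplexes. -/
def Sub.inter {X : SSet.{0}} (S T : Sub X) : Sub X where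
  carrier m := S.carrier m ∩ T.carrier m
  map_mem _ _ f _ h := ⟨S.map_mem f h.1, T.map_mem f h.2⟩

/-- A subcomplex `S` of `X`, viewed as a subcomplex of (the simplicial set underlying)
another subcomplex `T` of `X`. -/
def Sub.restrict {X : SSet.{0}} (T S : Sub X) : Sub T.toSSet where
  carrier m := {σ | σ.1 ∈ S.carrier m}
  map_mem _ _ f _ h := S.map_mem f h

/-- The (dimension zero) object of `SimplexCategoryᵒᵖ` indexing vertices. -/
abbrev V0 : SimplexCategoryᵒᵖ := Opposite.op (SimplexCategory.mk 0)

/-- The full subcomplex of `X` on a set `ν` of vertices: the simplices all of whose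
vertices lie in `ν`. -/
def fullSub (X : SSet.{0}) (ν : Set (X.obj V0)) : Sub X where
  carrier m := {σ | ∀ g : SimplexCategory.mk 0 ⟶ m.unop, X.map g.op σ ∈ ν}
  map_mem := by
    intro m m' f σ hσ g
    rw [← FunctorToTypes.map_comp_apply]
    exact hσ (g ≫ f.unop)

/-! ## Widenings and widened inclusions -/

/-- The widening `W_ν(X)` of `X` at a set `ν` of vertices: the full subcomplex of
`J × X` on the vertex set `({0} × X₀) ∪ ({1} × ν)`. -/
def wideSub (X : SSet.{0}) (ν : Set (X.obj V0)) : Sub (sprod J X) :=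
  fullSub (sprod J X) {p | p.1 0 = true → p.2 ∈ ν}

/-- The subcomplex `{0} × X` of `J × X` (the full subcomplex on the vertices
`{0} × X₀`). -/
def zeroSlice (X : SSet.{0}) : Sub (sprod J X) :=
  fullSub (sprod J X) {p | p.1 0 = false}

/-- For `A` a subcomplex of `Y`, the subcomplex `J × A` of `J × Y`. -/
def Sub.prodJ {Y : SSet.{0}} (A : Sub Y) : Sub (sprod J Y) where
  carrier m := {p | p.2 ∈ A.carrier m}
  map_mem _ _ f _ h := A.map_mem f h

/-- Given a subcomplex (inclusion) `A = X ⊆ Y` and a set `ν` of vertices of `Y`, the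
subcomplex `({0} × Y) ∪ W_{ν ∩ X₀}(X)` of `J × Y`: the domain of the inclusion
`X ↪ Y` widened at `ν`. -/
def widenedSub (Y : SSet.{0}) (A : Sub Y) (ν : Set (Y.obj V0)) : Sub (sprod J Y) :=
  (zeroSlice Y).union ((wideSub Y (ν ∩ A.carrier V0)).inter A.prodJ)

lemma zeroSlice_le_wideSub (Y : SSet.{0}) (ν : Set (Y.obj V0)) :
    (zeroSlice Y).Le (wideSub Y ν) := by
  intro m σ hσ g h
  exact absurd (hσ g) (by simp [h])

lemma wideSub_mono (Y : SSet.{0}) {ν ν' : Set (Y.obj V0)} (h : ν ⊆ ν') :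
    (wideSub Y ν).Le (wideSub Y ν') :=
  fun _ σ hσ g ht => h (hσ g ht)

lemma widenedSub_le (Y : SSet.{0}) (A : Sub Y) (ν : Set (Y.obj V0)) :
    (widenedSub Y A ν).Le (wideSub Y ν) := by
  refine fun m σ hσ => Or.elim hσ (fun h => ?_) (fun h => ?_)
  · exact zeroSlice_le_wideSub Y ν m h
  · exact wideSub_mono Y Set.inter_subset_left m h.1

/-- The inclusion `X ↪ Y` widened at `ν`: the inclusion
`({0} × Y) ∪ W_{ν ∩ X₀}(X) ↪ W_ν(Y)`. -/
def widenedIncl (Y : SSet.{0}) (A : Sub Y) (ν : Set (Y.obj V0)) :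
    (widenedSub Y A ν).toSSet ⟶ (wideSub Y ν).toSSet :=
  Sub.homOfLe (widenedSub_le Y A ν)

/-- `Wide`: the class of all widened inclusions. -/
def Wide : MorphismProperty SSet.{0} := fun _ _ h =>
  ∃ (Y : SSet.{0}) (A : Sub Y) (ν : Set (Y.obj V0)),
    Arrow.mk h = Arrow.mk (widenedIncl Y A ν)

/-- `Wide^(1)`: the class of inclusions widened at a single vertex. -/
def Wide1 : MorphismProperty SSet.{0} := fun _ _ h =>
  ∃ (Y : SSet.{0}) (A : Sub Y) (v : Y.obj V0),
    Arrow.mk h = Arrow.mk (widenedIncl Y A {v})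

/-! ## Narrow vertices -/

/-- A vertex `v` of `Y` is narrow if every simplex of `Y` has at most one vertex equal
to `v`. -/
def Narrow (Y : SSet.{0}) (v : Y.obj V0) : Prop :=
  ∀ ⦃m : SimplexCategoryᵒᵖ⦄ (σ : Y.obj m) (g g' : SimplexCategory.mk 0 ⟶ m.unop),
    Y.map g.op σ = v → Y.map g'.op σ = v → g = g'

/-- `Wide_nar`: the class of inclusions widened at a narrow set of vertices. -/
def WideNar : MorphismProperty SSet.{0} := fun _ _ h =>
  ∃ (Y : SSet.{0}) (A : Sub Y) (ν : Set (Y.obj V0)),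
    (∀ v ∈ ν, Narrow Y v) ∧ Arrow.mk h = Arrow.mk (widenedIncl Y A ν)

/-- `Wide_nar^(1)`: the class of inclusions widened at a single narrow vertex. -/
def WideNar1 : MorphismProperty SSet.{0} := fun _ _ h =>
  ∃ (Y : SSet.{0}) (A : Sub Y) (v : Y.obj V0),
    Narrow Y v ∧ Arrow.mk h = Arrow.mk (widenedIncl Y A {v})

/-! ## Standard simplices, boundaries, skeleta, iso-horns -/

/-- The unique map to the terminal simplicial set `Δ[0]`. -/
def toPt (X : SSet.{0}) : X ⟶ Δ[0] where
  app m := TypeCat.ofHom fun _ => SSet.stdSimplex.const 0 0 m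
  naturality m m' f := by
    ext x
    apply SSet.stdSimplex.objEquiv.injective
    apply SimplexCategory.Hom.ext
    apply OrderHom.ext
    funext j
    exact Subsingleton.elim (α := Fin 1) _ _

/-- The `i`-th vertex of the standard simplex `Δ[n]`. -/
def vrt (n : ℕ) (i : Fin (n + 1)) : Δ[n].obj V0 :=
  SSet.stdSimplex.const n i V0

/-- The boundary `∂Δ[n]`, as a subcomplex of `Δ[n]`: the simplices which are not
surjective as monotone maps. -/
def bSub (n : ℕ) : Sub Δ[n] where
  carrier m := {σ | ¬Function.Surjective (SSet.stdSimplex.asOrderHom σ)}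
  map_mem _ _ f σ hσ h := hσ (Function.Surjective.of_comp h)

/-- The `k`-skeleton of `Y`, as a subcomplex: the simplices which factor through some
simplex of dimension at most `k`. -/
def skSub (Y : SSet.{0}) (k : ℕ) : Sub Y where
  carrier m := {σ | ∃ (j : ℕ) (_ : j ≤ k) (f : m.unop ⟶ SimplexCategory.mk j)
    (τ : Y.obj (Opposite.op (SimplexCategory.mk j))), Y.map f.op τ = σ}
  map_mem := by
    rintro m m' φ σ ⟨j, hj, f, τ, rfl⟩
    exact ⟨j, hj, φ.unop ≫ f, τ, by rw [← FunctorToTypes.map_comp_apply]; rfl⟩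

/-- A `k`-simplex is nondegenerate if it admits no factorization through a simplex of
strictly smaller dimension. -/
def Nondegenerate (Y : SSet.{0}) {k : ℕ} (σ : Y.obj (Opposite.op (SimplexCategory.mk k))) :
    Prop :=
  ∀ (j : ℕ) (f : SimplexCategory.mk k ⟶ SimplexCategory.mk j)
    (τ : Y.obj (Opposite.op (SimplexCategory.mk j))), Y.map f.op τ = σ → k ≤ j

/-- The iso-horn inclusion `𝕍_i[m+1] ↪ ∇̄_i[m+1]`: the boundary inclusion
`∂Δ[m] ↪ Δ[m]` widened at the single vertex `i`, i.e. the inclusion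
`({0} × Δ[m]) ∪ W_i(∂Δ[m]) ↪ W_i(Δ[m])` of the iso-horn into the isoplex. -/
def isoHornIncl (m : ℕ) (i : Fin (m + 1)) :
    (widenedSub Δ[m] (bSub m) {vrt m i}).toSSet ⟶ (wideSub Δ[m] {vrt m i}).toSSet :=
  widenedIncl Δ[m] (bSub m) {vrt m i}

/-- `IsoHorn`: the class of all iso-horn inclusions. -/
def IsoHorn : MorphismProperty SSet.{0} := fun _ _ h =>
  ∃ (m : ℕ) (i : Fin (m + 1)), Arrow.mk h = Arrow.mk (isoHornIncl m i)

/-! ## The classes `({0} ↪ J) □ Bdry` and `({0} ↪ J) □ Mono` -/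

/-- The class `({0} ↪ J) □ Bdry` of pushout-products of the vertex `0 : Δ[0] ⟶ J`
with the boundary inclusions `∂Δ[n] ↪ Δ[n]`. -/
def ppJ0Bdry : MorphismProperty SSet.{0} := fun _ _ h =>
  ∃ n : ℕ, Arrow.mk h = Arrow.mk (pp (ptJ false) (SSet.boundary n).ι)

/-- The class `({0} ↪ J) □ Mono` of pushout-products of the vertex `0 : Δ[0] ⟶ J`
with all monomorphisms of simplicial sets. -/
def ppJ0Mono : MorphismProperty SSet.{0} := fun _ _ h =>
  ∃ (W Z : SSet.{0}) (g : W ⟶ Z), Mono g ∧ Arrow.mk h = Arrow.mk (pp (ptJ false) g)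

/-!
A simplex of `W_μ(X)` is a pair `(c, x)` with `c : [m] → {0, 1}` equal to `1` only at vertices
of `x` lying in `μ`. Splitting `c = a ∨ b`, where `b` agrees with `c` at the vertices of `x` in `ν`
and `a` at the others, gives the simplex `(a, (b, x))` of `W_{μ∖ν}(W_ν(X))`; conversely
`(a, (b, x)) ↦ (a ∨ b, x)` is evidently simplicial, and the splitting is its levelwise inverse.
-/

lemma Bool.or_and_decide_eq_of_imp {a b : Bool} {p : Prop} [Decidable p]
    (ha : a = true → ¬p) (hb : b = true → p) :
    ((a || b) && !decide p) = a ∧ ((a || b) && decide p) = b := by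
  by_cases hp : p <;> cases a <;> cases b <;> simp_all

abbrev vertex (X : SSet.{0}) {m : SimplexCategoryᵒᵖ} (x : X.obj m) (i : Fin (m.unop.len + 1)) :
    X.obj V0 :=
  X.map (SimplexCategory.const (SimplexCategory.mk 0) m.unop i).op x

lemma mem_fullSub_iff (X : SSet.{0}) (ν : Set (X.obj V0)) {m : SimplexCategoryᵒᵖ}
    (x : X.obj m) : x ∈ (fullSub X ν).carrier m ↔ ∀ i, vertex X x i ∈ ν :=
  ⟨fun h _ => h _, fun h g => SimplexCategory.eq_const_of_zero g ▸ h _⟩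

lemma mem_wideSub_iff (X : SSet.{0}) (ν : Set (X.obj V0)) {m : SimplexCategoryᵒᵖ}
    (p : (sprod J X).obj m) :
    p ∈ (wideSub X ν).carrier m ↔ ∀ i, p.1 i = true → vertex X p.2 i ∈ ν :=
  mem_fullSub_iff _ _ p

section Iterated

variable (X : SSet.{0}) (ν μ : Set (X.obj V0))

abbrev wideSubWideSub : Sub (sprod J (wideSub X ν).toSSet) :=
  wideSub (wideSub X ν).toSSet {q | q.1.1 0 = false ∧ q.1.2 ∈ μ \ ν}

lemma mem_wideSubWideSub_iff {m : SimplexCategoryᵒᵖ} (a : J.obj m)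
    (p : (wideSub X ν).toSSet.obj m) :
    (a, p) ∈ (wideSubWideSub X ν μ).carrier m ↔
      ∀ i, a i = true → p.1.1 i = false ∧ vertex X p.1.2 i ∈ μ \ ν :=
  mem_wideSub_iff _ _ (a, p)

open Classical in
noncomputable def wideSubWideSubEquiv (hνμ : ν ⊆ μ) (m : SimplexCategoryᵒᵖ) :
    (wideSubWideSub X ν μ).toSSet.obj m ≃ (wideSub X μ).toSSet.obj m where
  toFun σ := ⟨(fun i => σ.1.1 i || σ.1.2.1.1 i, σ.1.2.1.2), by
    refine (mem_wideSub_iff _ _ _).mpr fun i hi => ?_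
    rcases Bool.or_eq_true_iff.mp hi with ha | hb
    · exact ((mem_wideSubWideSub_iff X ν μ _ _).mp σ.2 i ha).2.1
    · exact hνμ ((mem_wideSub_iff X ν _).mp σ.1.2.2 i hb)⟩
  invFun σ :=
    ⟨(fun i => σ.1.1 i && !decide (vertex X σ.1.2 i ∈ ν),
      ⟨(fun i => σ.1.1 i && decide (vertex X σ.1.2 i ∈ ν), σ.1.2), by
        refine (mem_wideSub_iff _ _ _).mpr fun i hi => ?_
        simp only [Bool.and_eq_true, decide_eq_true_eq] at hi
        exact hi.2⟩), by
      refine (mem_wideSubWideSub_iff X ν μ _ _).mpr fun i hi => ?_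
      simp only [Bool.and_eq_true, Bool.not_eq_true', decide_eq_false_iff_not] at hi
      exact ⟨by simp [hi.2], (mem_wideSub_iff X μ _).mp σ.2 i hi.1, hi.2⟩⟩
  left_inv := by
    rintro ⟨⟨a, ⟨⟨b, x⟩, hb⟩⟩, ha⟩
    have split (i) := Bool.or_and_decide_eq_of_imp
      (fun h => ((mem_wideSubWideSub_iff X ν μ _ _).mp ha i h).2.2)
      ((mem_wideSub_iff X ν _).mp hb i)
    exact Subtype.ext <| Prod.ext (funext fun i => (split i).1) <|
      Subtype.ext <| Prod.ext (funext fun i => (split i).2) rfl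
  right_inv σ := Subtype.ext <| Prod.ext (funext fun i => by
    by_cases hν : vertex X σ.1.2 i ∈ ν <;> simp [hν]) rfl

end Iterated

/-- For `ν ⊆ μ` sets of vertices of `X`, the widening `W_μ(X)` is
isomorphic to the widening of `W_ν(X)` at the vertex set `{(0, v) : v ∈ μ ∖ ν}`. -/
theorem wideSub_iso_wideSub_wideSub (X : SSet.{0}) (ν μ : Set (X.obj V0)) (hνμ : ν ⊆ μ) :
    Nonempty ((wideSub X μ).toSSet ≅
      (wideSub (wideSub X ν).toSSet {q | q.1.1 0 = false ∧ q.1.2 ∈ μ \ ν}).toSSet) :=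
  ⟨(NatIso.ofComponents (fun m => (wideSubWideSubEquiv X ν μ hνμ m).toIso) fun _ => rfl).symm⟩

end Paper
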